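/- Suppose for every edge e ∈ E that (1/(4m))·(1 + 1/(4c_e))^(paths_t(e)) ≤ 3, where m = |E| ≥ 1 and c_e ≥ 1. Then the load of every edge, load_t(e) = paths_t(e)/c_e, is at most 4·log₂(12m). -/

import Mathlib

/-!
Bernoulli's inequality `2^x ≤ 1 + x` on `[0, 1]`, applied with `x = 1/(4 c_e) ≤ 1`, turns the
hypothesis `(1 + x)^p ≤ 12 m` into `2^(p x) ≤ 12 m`, i.e. `p / (4 c_e) ≤ log₂(12 m)`.
-/

open Real

lemma two_rpow_le_one_add {x : ℝ} (h0 : 0 ≤ x) (h1 : x ≤ 1) : (2 : ℝ) ^ x ≤ 1 + x := by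
  have := rpow_one_add_le_one_add_mul_self (s := 1) (by norm_num) h0 h1
  norm_num at this
  linarith

lemma natCast_mul_le_logb_two_of_one_add_pow_le {x B : ℝ} {n : ℕ} (h0 : 0 ≤ x) (h1 : x ≤ 1)
    (h : (1 + x) ^ n ≤ B) : n * x ≤ logb 2 B := by
  have hpow : (2 : ℝ) ^ (n * x) ≤ B :=
    calc (2 : ℝ) ^ (n * x) = ((2 : ℝ) ^ x) ^ n := by
          rw [mul_comm, rpow_mul (by norm_num), rpow_natCast]
      _ ≤ (1 + x) ^ n := pow_le_pow_left₀ (by positivity) (two_rpow_le_one_add h0 h1) n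
      _ ≤ B := h
  rwa [← rpow_le_rpow_left_iff (by norm_num : (1 : ℝ) < 2),
    rpow_logb (by norm_num) (by norm_num) (lt_of_lt_of_le (by positivity) hpow)]

/-- If `(1/(4m)) (1 + 1/(4 c e))^(paths e) ≤ 3` for every edge `e`, with
`m = |E| ≥ 1` and `c e ≥ 1`, then the load `paths e / c e` of every edge is at most
`4 log₂(12 m)`. -/
theorem stmt_11 {E : Type*} [Fintype E] (hE : 1 ≤ Fintype.card E)
    (c : E → ℝ) (hc : ∀ e, 1 ≤ c e) (paths : E → ℕ)
    (h : ∀ e, (1 / (4 * (Fintype.card E : ℝ))) * (1 + 1 / (4 * c e)) ^ (paths e) ≤ 3) :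
    ∀ e, (paths e : ℝ) / c e ≤ 4 * Real.logb 2 (12 * (Fintype.card E : ℝ)) := by
  intro e
  have hm : (0 : ℝ) < 4 * Fintype.card E := by
    have : (1 : ℝ) ≤ Fintype.card E := by exact_mod_cast hE
    linarith
  have hce : 0 < c e := lt_of_lt_of_le one_pos (hc e)
  have hx1 : 1 / (4 * c e) ≤ 1 := by
    rw [div_le_one (by positivity)]
    linarith [hc e]
  have hpow : (1 + 1 / (4 * c e)) ^ paths e ≤ 12 * (Fintype.card E : ℝ) := by
    have := h e
    rw [one_div, inv_mul_le_iff₀ hm] at this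
    linarith
  have hlog := natCast_mul_le_logb_two_of_one_add_pow_le (by positivity) hx1 hpow
  have hload : (paths e : ℝ) / c e = 4 * (paths e * (1 / (4 * c e))) := by
    field_simp
  linarith
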